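/- (Green kernel, restricted uniform case) Fix β > 0, set ρ_R(u) = 1/(e^{βu} + 1) and C_R(u,v) = (1/β)·ρ_R(max(u,v)) for u, v ≥ 0. Then for every smooth compactly supported f: [0,∞) → ℝ with f'(0) = 0 and every v > 0: ∫_{0}^{∞} C_R(u,v) · (Q_R f)(u) du = f(v), where (Q_R f)(u) = −d/du [ f'(u) / (ρ_R(u)(1 − ρ_R(u))) ]. That is, C_R is the Green kernel of the operator Q_R with Neumann boundary condition at 0, so the covariance C_R(u,v) = (1/β)·ρ_R(u ∨ v) of the static Gaussian fluctuation limit equals the kernel of Q_R^{-1}. -/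

import Mathlib

open Real MeasureTheory Set Filter

/-- `ρ_R(u) = 1/(e^{βu} + 1)`. -/
noncomputable def rhoR (β u : ℝ) : ℝ := 1 / (Real.exp (β * u) + 1)

/-- The operator `Q_R f = -(f'/(ρ_R(1-ρ_R)))'`. -/
noncomputable def QR (β : ℝ) (f : ℝ → ℝ) (u : ℝ) : ℝ :=
  -deriv (fun w => deriv f w / (rhoR β w * (1 - rhoR β w))) u

/-- The Green kernel `C_R(u,v) = (1/β) ρ_R(u ∨ v)`. -/
noncomputable def CR (β u v : ℝ) : ℝ := (1 / β) * rhoR β (max u v)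

lemma denom_pos (β u : ℝ) : 0 < Real.exp (β * u) + 1 := by positivity

lemma hR_pos (β u : ℝ) : 0 < rhoR β u * (1 - rhoR β u) := by
  have hD := denom_pos β u
  have hE := Real.exp_pos (β * u)
  have h1 : rhoR β u = 1 / (Real.exp (β * u) + 1) := rfl
  have h2 : rhoR β u * (1 - rhoR β u)
      = Real.exp (β * u) / (Real.exp (β * u) + 1) ^ 2 := by
    rw [h1]; field_simp; ring
  rw [h2]; positivity

lemma rhoR_hasDerivAt (β u : ℝ) :
    HasDerivAt (rhoR β) (-(β * (rhoR β u * (1 - rhoR β u)))) u := by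
  have hD := (denom_pos β u).ne'
  have h1 : HasDerivAt (fun w => Real.exp (β * w) + 1) (β * Real.exp (β * u)) u := by
    have := (Real.hasDerivAt_exp (β * u)).comp u ((hasDerivAt_id u).const_mul β)
    simpa [mul_comm] using this.add_const 1
  have h2 := h1.inv hD
  have heq : (fun w => Real.exp (β * w) + 1)⁻¹ = rhoR β := by
    funext w; simp [rhoR, one_div]
  rw [heq] at h2
  refine h2.congr_deriv ?_
  have : rhoR β u * (1 - rhoR β u)
      = Real.exp (β * u) / (Real.exp (β * u) + 1) ^ 2 := by
    simp only [rhoR]; field_simp; ring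
  rw [this]; field_simp

lemma rhoR_contDiff (β : ℝ) : ContDiff ℝ (⊤ : ℕ∞) (rhoR β) := by
  exact contDiff_const.div
    ((Real.contDiff_exp.comp (contDiff_const.mul contDiff_id)).add contDiff_const)
    (fun u => (denom_pos β u).ne')

theorem green_kernel_R (β : ℝ) (hβ : 0 < β) :
    ∀ f : ℝ → ℝ, ContDiff ℝ (⊤ : ℕ∞) f → HasCompactSupport f → deriv f 0 = 0 →
      ∀ v > (0:ℝ), (∫ u in Set.Ioi (0:ℝ), CR β u v * QR β f u) = f v := by
  intro f hf hcs hf0 v hv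
  set h : ℝ → ℝ := fun u => rhoR β u * (1 - rhoR β u) with hh
  have hpos : ∀ u, 0 < h u := fun u => hR_pos β u
  have hρ := rhoR_contDiff β
  have hρcont : Continuous (rhoR β) := hρ.continuous
  have hhcd : ContDiff ℝ (⊤ : ℕ∞) h := hρ.mul (contDiff_const.sub hρ)
  have hf' : ContDiff ℝ (⊤:ℕ∞) (deriv f) := (contDiff_infty_iff_deriv.mp (hf.of_le (by simp))).2
  have hle : (1:WithTop ℕ∞) ≤ ((⊤:ℕ∞) : WithTop ℕ∞) := by
    exact_mod_cast (le_top : (1:ℕ∞) ≤ ⊤)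
  set g : ℝ → ℝ := fun u => deriv f u / h u with hg
  have hgcd : ContDiff ℝ (⊤:ℕ∞) g := hf'.div (hhcd.of_le (by simp)) (fun u => (hpos u).ne')
  have hgcs : HasCompactSupport g := by
    have : HasCompactSupport (deriv f) := hcs.deriv
    exact this.mul_right
  have hg0 : g 0 = 0 := by simp [hg, hf0]
  have hQR : ∀ u, QR β f u = -deriv g u := fun u => rfl
  -- the product P = ρ * g
  set P : ℝ → ℝ := fun u => rhoR β u * g u with hP
  have hPcd : ContDiff ℝ (⊤:ℕ∞) P := (hρ.of_le (by simp)).mul hgcd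
  have hPcs : HasCompactSupport P := hgcs.mul_left
  have hgdiff : ∀ u, HasDerivAt g (deriv g u) u :=
    fun u => (hgcd.differentiable (ne_of_gt (lt_of_lt_of_le zero_lt_one hle)) u).hasDerivAt
  have hPderiv : ∀ u, deriv P u = -(β * h u) * g u + rhoR β u * deriv g u := by
    intro u
    exact ((rhoR_hasDerivAt β u).mul (hgdiff u)).deriv
  have hhg : ∀ u, h u * g u = deriv f u := by
    intro u
    show h u * (deriv f u / h u) = deriv f u
    rw [mul_comm]
    exact div_mul_cancel₀ _ (hpos u).ne'
  -- pointwise identity on Ioi v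
  have hkey : ∀ u, (1 / β) * rhoR β u * (-deriv g u)
      = -((1 / β) * deriv P u) - deriv f u := by
    intro u
    rw [hPderiv u]
    have hb : β ≠ 0 := hβ.ne'
    have hu := hhg u
    revert hu
    generalize g u = G
    generalize h u = H
    generalize deriv g u = DG
    generalize deriv f u = DF
    generalize rhoR β u = R
    intro hu
    field_simp
    linear_combination (-β) * hu
  -- continuity and integrability facts
  have hgderiv_cont : Continuous (deriv g) := hgcd.continuous_deriv hle
  have hPderiv_cont : Continuous (deriv P) := hPcd.continuous_deriv hle
  have hfderiv_cont : Continuous (deriv f) := hf'.continuous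
  have hCRcont : Continuous (fun u => CR β u v) :=
    continuous_const.mul (hρcont.comp (continuous_id.max continuous_const))
  have hFcont : Continuous (fun u => CR β u v * QR β f u) := by
    simp only [hQR]
    exact hCRcont.mul hgderiv_cont.neg
  have hFcs : HasCompactSupport (fun u => CR β u v * QR β f u) := by
    have h2 : HasCompactSupport ((fun _ : ℝ => (-1:ℝ)) * deriv g) :=
      hgcs.deriv.mul_left
    have h3 : (fun u => QR β f u) = ((fun _ : ℝ => (-1:ℝ)) * deriv g) := by
      funext u; simp [hQR u]
    have h1 : HasCompactSupport (fun u => QR β f u) := h3 ▸ h2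
    exact h1.mul_left
  have hFint : Integrable (fun u => CR β u v * QR β f u) :=
    hFcont.integrable_of_hasCompactSupport hFcs
  -- split the integral
  have hsplit : (∫ u in Set.Ioi (0:ℝ), CR β u v * QR β f u)
      = (∫ u in Set.Ioc (0:ℝ) v, CR β u v * QR β f u)
        + ∫ u in Set.Ioi v, CR β u v * QR β f u := by
    rw [← setIntegral_union (Set.Ioc_disjoint_Ioi le_rfl) measurableSet_Ioi
      hFint.integrableOn hFint.integrableOn, Set.Ioc_union_Ioi_eq_Ioi hv.le]
  rw [hsplit]
  -- first integral
  have h1 : (∫ u in Set.Ioc (0:ℝ) v, CR β u v * QR β f u)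
      = -((1 / β) * rhoR β v * g v) := by
    have hcongr : ∀ u ∈ Set.Ioc (0:ℝ) v,
        CR β u v * QR β f u = ((1 / β) * rhoR β v) * (-deriv g u) := by
      intro u hu
      rw [hQR, CR, max_eq_right hu.2]
    rw [setIntegral_congr_fun measurableSet_Ioc hcongr]
    rw [integral_const_mul]
    have hftc : (∫ u in Set.Ioc (0:ℝ) v, deriv g u) = g v - g 0 := by
      rw [← intervalIntegral.integral_of_le hv.le]
      exact intervalIntegral.integral_deriv_eq_sub
        (fun u _ => hgcd.differentiable (ne_of_gt (lt_of_lt_of_le zero_lt_one hle)) u)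
        (hgderiv_cont.intervalIntegrable 0 v)
    rw [integral_neg, hftc, hg0]
    ring
  -- second integral
  have h2 : (∫ u in Set.Ioi v, CR β u v * QR β f u)
      = (1 / β) * rhoR β v * g v + f v := by
    have hcongr : ∀ u ∈ Set.Ioi v,
        CR β u v * QR β f u = -((1 / β) * deriv P u) - deriv f u := by
      intro u hu
      rw [hQR, CR, max_eq_left (le_of_lt hu)]
      exact hkey u
    rw [setIntegral_congr_fun measurableSet_Ioi hcongr]
    have hintP : IntegrableOn (fun u => deriv P u) (Set.Ioi v) :=
      (hPderiv_cont.integrable_of_hasCompactSupport hPcs.deriv).integrableOn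
    have hint2 : IntegrableOn (fun u => deriv f u) (Set.Ioi v) :=
      (hfderiv_cont.integrable_of_hasCompactSupport hcs.deriv).integrableOn
    have e1 : (∫ u in Set.Ioi v, (-((1 / β) * deriv P u) - deriv f u))
        = (-(1/β)) * (∫ u in Set.Ioi v, deriv P u)
          + (-1 : ℝ) * (∫ u in Set.Ioi v, deriv f u) := by
      rw [← integral_const_mul, ← integral_const_mul,
        ← integral_add (hintP.const_mul _) (hint2.const_mul _)]
      congr 1; funext u; ring
    rw [e1, hPcs.integral_Ioi_deriv_eq (hPcd.of_le hle) v,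
      hcs.integral_Ioi_deriv_eq (hf.of_le (by simp)) v]
    simp only [hP]
    ring
  rw [h1, h2]; ring
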